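/- arXiv:2512.05931 — 2 statements merged into one kernel-verified Lean document; each statement's English description precedes it below -/
import Mathlib

section
/- Let ζ: [0,∞) → [0,∞) be convex with ζ(ε) ≤ ΔG(ε) for all ε ≥ 0. Then for any probability distribution D on X, reference model ĥ: X → Y, and critic h: X → Z₂, we have ζ(E_{X∼D}[Δψ(X, ĥ(X), h(X))]) ≤ E_{X∼D}[Δφ(X, ĥ(X), τ(h(X)))]. -/
open Set MeasureTheory

/-- Supporting line for a convex function on `Ici 0` at an interior point `m > 0`. -/
lemma exists_supporting_line {f : ℝ → ℝ} (hf : ConvexOn ℝ (Set.Ici 0) f) {m : ℝ} (hm : 0 < m) :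
    ∃ c : ℝ, ∀ t ∈ Set.Ici (0 : ℝ), f m + c * (t - m) ≤ f t := by
  set S : Set ℝ := (fun t => (f m - f t) / (m - t)) '' (Set.Ico 0 m) with hS
  have hSne : S.Nonempty := ⟨_, ⟨0, ⟨le_refl 0, hm⟩, rfl⟩⟩
  have hSbdd : BddAbove S := by
    refine ⟨(f (m + 1) - f m) / (m + 1 - m), ?_⟩
    rintro v ⟨t, ⟨ht0, htm⟩, rfl⟩
    exact hf.slope_mono_adjacent ht0 (by simp; linarith) htm (by linarith)
  refine ⟨sSup S, fun t ht => ?_⟩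
  rcases lt_trichotomy t m with h | h | h
  · have hmem : (f m - f t) / (m - t) ∈ S := ⟨t, ⟨ht, h⟩, rfl⟩
    have := le_csSup hSbdd hmem
    have hpos : 0 < m - t := by linarith
    rw [div_le_iff₀ hpos] at this
    nlinarith
  · simp [h]
  · have hle : sSup S ≤ (f t - f m) / (t - m) := by
      apply csSup_le hSne
      rintro v ⟨u, ⟨hu0, hum⟩, rfl⟩
      exact hf.slope_mono_adjacent hu0 (le_trans hu0 (le_of_lt (hum.trans h))) hum h
    have hpos : 0 < t - m := by linarith
    rw [le_div_iff₀ hpos] at hle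
    nlinarith

/-- if ζ is convex with ζ ≤ ΔG on [0, ∞), then
ζ(E[Δψ(X, hr(X), h(X))]) ≤ E[Δφ(X, hr(X), τ(h(X)))]. -/
theorem zeta_expectation_bound {X : Type*} [MeasurableSpace X]
    {Y Z₁ Z₂ : Type*} [Nonempty Z₁] [Nonempty Z₂]
    (φ : X → Y → Z₁ → ℝ) (ψ : X → Y → Z₂ → ℝ) (τ : Z₂ → Z₁)
    (hφ : ∀ x y, BddBelow (Set.range (φ x y)))
    (hψ : ∀ x y, BddBelow (Set.range (ψ x y)))
    (Dφ : X → Y → Z₁ → ℝ)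
    (hDφ : ∀ x y z, Dφ x y z = φ x y z - ⨅ z', φ x y z')
    (Dψ : X → Y → Z₂ → ℝ)
    (hDψ : ∀ x y z, Dψ x y z = ψ x y z - ⨅ z', ψ x y z')
    (ΔG : ℝ → ℝ)
    (hΔG : ∀ ε, ΔG ε = sInf {v | ∃ x y z, Dψ x y z ≤ ε ∧ v = Dφ x y (τ z)})
    (ζ : ℝ → ℝ) (hζconv : ConvexOn ℝ (Set.Ici 0) ζ)
    (hζΔG : ∀ ε ≥ (0 : ℝ), ζ ε ≤ ΔG ε)
    (D : Measure X) [IsProbabilityMeasure D]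
    (hr : X → Y) (h : X → Z₂)
    (hint₁ : Integrable (fun x => Dψ x (hr x) (h x)) D)
    (hint₂ : Integrable (fun x => Dφ x (hr x) (τ (h x))) D) :
    ζ (∫ x, Dψ x (hr x) (h x) ∂D) ≤ ∫ x, Dφ x (hr x) (τ (h x)) ∂D := by
  have hDφ0 : ∀ x y z, 0 ≤ Dφ x y z := fun x y z => by
    rw [hDφ]; exact sub_nonneg.mpr (ciInf_le (hφ x y) z)
  have hDψ0 : ∀ x y z, 0 ≤ Dψ x y z := fun x y z => by
    rw [hDψ]; exact sub_nonneg.mpr (ciInf_le (hψ x y) z)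
  -- pointwise bound ζ(Dψ x) ≤ Dφ x
  have hpt : ∀ x, ζ (Dψ x (hr x) (h x)) ≤ Dφ x (hr x) (τ (h x)) := by
    intro x
    refine le_trans (hζΔG _ (hDψ0 _ _ _)) ?_
    rw [hΔG]
    apply csInf_le
    · exact ⟨0, by rintro v ⟨a, b, c, -, rfl⟩; exact hDφ0 _ _ _⟩
    · exact ⟨x, hr x, h x, le_refl _, rfl⟩
  set m := ∫ x, Dψ x (hr x) (h x) ∂D with hm
  have hm0 : 0 ≤ m := integral_nonneg fun x => hDψ0 _ _ _
  rcases eq_or_lt_of_le hm0 with heq | hlt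
  · -- m = 0 : Dψ = 0 a.e.
    have hzero : (fun x => Dψ x (hr x) (h x)) =ᵐ[D] 0 := by
      rw [← integral_eq_zero_iff_of_nonneg (fun x => hDψ0 _ _ _) hint₁]
      exact heq.symm
    rw [← heq]
    have : ∀ᵐ x ∂D, ζ 0 ≤ Dφ x (hr x) (τ (h x)) := by
      filter_upwards [hzero] with x hx
      have := hpt x
      simp only [Pi.zero_apply] at hx
      rwa [hx] at this
    calc ζ 0 = ∫ _x, ζ 0 ∂D := by simp
      _ ≤ _ := integral_mono_ae (integrable_const _) hint₂ this
  · -- m > 0 : use a supporting line at m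
    obtain ⟨c, hc⟩ := exists_supporting_line hζconv hlt
    have hptline : ∀ x, ζ m + c * (Dψ x (hr x) (h x) - m) ≤ Dφ x (hr x) (τ (h x)) :=
      fun x => le_trans (hc _ (hDψ0 _ _ _)) (hpt x)
    have hInt0 : Integrable (fun x => Dψ x (hr x) (h x) - m) D :=
      hint₁.sub (integrable_const m)
    have hInt1 : Integrable (fun x => c * (Dψ x (hr x) (h x) - m)) D := hInt0.const_mul c
    have hintline : Integrable (fun x => ζ m + c * (Dψ x (hr x) (h x) - m)) D :=
      (integrable_const _).add hInt1
    have := integral_mono hintline hint₂ hptline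
    calc ζ m = ∫ x, (ζ m + c * (Dψ x (hr x) (h x) - m)) ∂D := by
          rw [integral_add (integrable_const _) hInt1, integral_const_mul,
            integral_sub hint₁ (integrable_const m)]
          simp [← hm]
      _ ≤ _ := this
end

section
/- Suppose there exists a < 0 such that aε + ΔG(0) ≤ ΔG(ε) for all ε ≥ 0. Then the function ζ⋆(ε) = sup{aε + b : a ≤ 0, b ∈ ℝ, aω + b ≤ ΔG(ω) ∀ω ≥ 0} satisfies ζ⋆(0) = ΔG(0) and ζ⋆ is continuous at 0 from the right, i.e., lim_{ε→0⁺} ζ⋆(ε) = ζ⋆(0). -/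
open Set Filter

/-- if some affine minorant with negative slope passes through (0, ΔG(0)),
then ζ⋆(0) = ΔG(0) and ζ⋆ is right-continuous at 0. -/
theorem zetaStar_continuous_at_zero (ΔG : ℝ → ℝ) (hΔG : ∀ ε ≥ (0 : ℝ), 0 ≤ ΔG ε)
    (ζs : ℝ → ℝ)
    (hζs : ∀ ε, ζs ε =
      sSup {v | ∃ a b : ℝ, a ≤ 0 ∧ (∀ ω ≥ (0 : ℝ), a * ω + b ≤ ΔG ω) ∧ v = a * ε + b})
    (hmin : ∃ a < (0 : ℝ), ∀ ε ≥ (0 : ℝ), a * ε + ΔG 0 ≤ ΔG ε) :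
    ζs 0 = ΔG 0 ∧ Tendsto ζs (nhdsWithin 0 (Set.Ioi 0)) (nhds (ζs 0)) := by
  obtain ⟨a₀, ha₀, hm⟩ := hmin
  have key : ∀ ε ≥ (0 : ℝ), a₀ * ε + ΔG 0 ≤ ζs ε ∧ ζs ε ≤ ΔG 0 := by
    intro ε hε
    rw [hζs]
    have hub : ∀ v ∈ {v | ∃ a b : ℝ, a ≤ 0 ∧ (∀ ω ≥ (0 : ℝ), a * ω + b ≤ ΔG ω) ∧
        v = a * ε + b}, v ≤ ΔG 0 := by
      rintro v ⟨a, b, ha, hab, rfl⟩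
      have hb := hab 0 le_rfl
      nlinarith
    have hmem : (a₀ * ε + ΔG 0) ∈ {v | ∃ a b : ℝ, a ≤ 0 ∧
        (∀ ω ≥ (0 : ℝ), a * ω + b ≤ ΔG ω) ∧ v = a * ε + b} :=
      ⟨a₀, ΔG 0, le_of_lt ha₀, hm, rfl⟩
    exact ⟨le_csSup ⟨ΔG 0, hub⟩ hmem, csSup_le ⟨_, hmem⟩ hub⟩
  have h0 : ζs 0 = ΔG 0 := by
    have h1 := (key 0 le_rfl).1
    have h2 := (key 0 le_rfl).2
    linarith
  refine ⟨h0, ?_⟩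
  rw [h0]
  apply tendsto_of_tendsto_of_tendsto_of_le_of_le' (g := fun ε => a₀ * ε + ΔG 0)
    (h := fun _ => ΔG 0)
  · have : Tendsto (fun ε => a₀ * ε + ΔG 0) (nhds 0) (nhds (a₀ * 0 + ΔG 0)) := by
      exact ((continuous_const.mul continuous_id).add continuous_const).tendsto 0
    simpa using this.mono_left nhdsWithin_le_nhds
  · exact tendsto_const_nhds
  · filter_upwards [self_mem_nhdsWithin] with ε hε
    exact (key ε (le_of_lt hε)).1
  · filter_upwards [self_mem_nhdsWithin] with ε hε
    exact (key ε (le_of_lt hε)).2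
end
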